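/- arXiv:2009.14488 — 2 statements merged into one kernel-verified Lean document; each statement's English description precedes it below -/
import Mathlib

section
/- Let m ≥ 1 be an integer, δ_1,…,δ_m ∈ {+1,−1}, and let δ be the (+1,δ_1,…,δ_m)-Thue–Morse sequence with |p(m+1)| > 1. Then the Hausdorff-metric limit K of the sets (p(m+1))^{−n}·P(n) is the unique nonempty compact subset of ℂ satisfying K = ⋃_{j=0}^m S_j(K), where S_j(z) = (p(j) + δ_j e^{2jπi/m} z)/p(m+1). -/
/-!
The steps `ε_k = δ_k e^{2kπi/m}` of the path `p` form an `(m+1)`-block-multiplicative sequence,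
because `e^{2πi/m}` is an `m`-th root of unity and `m + 1 ≡ 1 (mod m)`. Hence `p` is
self-similar, `p((m+1)^n j + r) = p(m+1)^n p(j) + ε_j p(r)` for `r ≤ (m+1)^n`, and the
`(n+1)`-st rescaled polygonal path is the image of the `n`-th one under the Hutchinson operator
`A ↦ ⋃ j, S j '' A`. On nonempty compact sets with the Hausdorff metric this operator is a
contraction of ratio `1/|p(m+1)|`, so the limit `K` of the orbit is a fixed point, and by
contraction it is the only one.
-/

open Complex Filter Metric Set TopologicalSpace
open scoped Real Topology Pointwise NNReal ENNReal

section HausdorffEDist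

variable {α β ι : Type*}

-- For `ρ = 0` and `t = ∅` this would fail, since `0 * ∞ = 0` in `ℝ≥0∞`.
theorem infEDist_image_le_of_lipschitzWith [PseudoEMetricSpace α] [PseudoEMetricSpace β]
    {f : α → β} {ρ : ℝ≥0} (hρ : ρ ≠ 0) (hf : LipschitzWith ρ f) (x : α) (t : Set α) :
    infEDist (f x) (f '' t) ≤ ρ * infEDist x t := by
  have hρ' : (ρ : ℝ≥0∞) ≠ 0 := by exact_mod_cast hρ
  simp only [infEDist, iInf_image, ENNReal.mul_iInf_of_ne hρ' ENNReal.coe_ne_top]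
  exact iInf₂_mono fun y _ => hf x y

theorem hausdorffEDist_image_le_of_lipschitzWith [PseudoEMetricSpace α]
    [PseudoEMetricSpace β] {f : α → β} {ρ : ℝ≥0} (hρ : ρ ≠ 0) (hf : LipschitzWith ρ f)
    (s t : Set α) : hausdorffEDist (f '' s) (f '' t) ≤ ρ * hausdorffEDist s t := by
  refine hausdorffEDist_le_of_infEDist ?_ ?_ <;> rintro _ ⟨x, hx, rfl⟩
  · exact (infEDist_image_le_of_lipschitzWith hρ hf x t).trans
      (mul_le_mul_right (infEDist_le_hausdorffEDist_of_mem hx) _)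
  · rw [hausdorffEDist_comm]
    exact (infEDist_image_le_of_lipschitzWith hρ hf x s).trans
      (mul_le_mul_right (infEDist_le_hausdorffEDist_of_mem hx) _)

theorem hausdorffEDist_biUnion_le [PseudoEMetricSpace α] (s : Finset ι) (u v : ι → Set α) :
    hausdorffEDist (⋃ j ∈ s, u j) (⋃ j ∈ s, v j) ≤ ⨆ j ∈ s, hausdorffEDist (u j) (v j) :=
  hausdorffEDist_iUnion_le.trans (iSup_mono fun _ => hausdorffEDist_iUnion_le)

end HausdorffEDist

section Hutchinson

variable {α ι : Type*} [TopologicalSpace α]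

def hutchinson (s : Finset ι) (hs : s.Nonempty) (S : ι → α → α) (hS : ∀ j, Continuous (S j))
    (A : NonemptyCompacts α) : NonemptyCompacts α where
  carrier := ⋃ j ∈ s, S j '' A
  isCompact' := s.finite_toSet.isCompact_biUnion fun j _ => A.isCompact.image (hS j)
  nonempty' := by
    obtain ⟨j, hj⟩ := hs
    exact (A.nonempty.image (S j)).mono (subset_biUnion_of_mem (u := fun j => S j '' A) hj)

@[simp]
theorem coe_hutchinson (s : Finset ι) (hs : s.Nonempty) (S : ι → α → α)
    (hS : ∀ j, Continuous (S j)) (A : NonemptyCompacts α) :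
    (hutchinson s hs S hS A : Set α) = ⋃ j ∈ s, S j '' A :=
  rfl

theorem coe_iterate_hutchinson {s : Finset ι} (hs : s.Nonempty) {S : ι → α → α}
    (hS : ∀ j, Continuous (S j)) {X : ℕ → Set α} (A : NonemptyCompacts α)
    (hA : (A : Set α) = X 0) (hX : ∀ n, ⋃ j ∈ s, S j '' X n = X (n + 1)) (n : ℕ) :
    ((hutchinson s hs S hS)^[n] A : Set α) = X n := by
  induction n with
  | zero => exact hA
  | succ n ih => rw [Function.iterate_succ_apply', coe_hutchinson, ih, hX]

end Hutchinson

theorem lipschitzWith_hutchinson {α ι : Type*} [EMetricSpace α] (s : Finset ι)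
    (hs : s.Nonempty) {S : ι → α → α} {ρ : ℝ≥0} (hρ : ρ ≠ 0) (hS : ∀ j, LipschitzWith ρ (S j)) :
    LipschitzWith ρ (hutchinson s hs S fun j => (hS j).continuous) := fun A B =>
  (hausdorffEDist_biUnion_le s _ _).trans <| iSup₂_le fun j _ =>
    hausdorffEDist_image_le_of_lipschitzWith hρ (hS j) A B

section Attractor

variable {α ι : Type*} [MetricSpace α] {s : Finset ι} {S : ι → α → α} {ρ : ℝ≥0}

theorem eq_biUnion_image_of_tendsto_hausdorffDist (hs : s.Nonempty) (hρ : ρ ≠ 0)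
    (hS : ∀ j, LipschitzWith ρ (S j)) {X : ℕ → Set α} (hX₀ : IsCompact (X 0))
    (hX₀ne : (X 0).Nonempty) (hX : ∀ n, ⋃ j ∈ s, S j '' X n = X (n + 1)) {K : Set α}
    (hKne : K.Nonempty) (hKc : IsCompact K)
    (hK : Tendsto (fun n => hausdorffDist (X n) K) atTop (𝓝 0)) :
    K = ⋃ j ∈ s, S j '' K := by
  let T := hutchinson s hs S fun j => (hS j).continuous
  let K₀ : NonemptyCompacts α := ⟨⟨K, hKc⟩, hKne⟩
  have hK₀ : Function.IsFixedPt T K₀ := by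
    refine isFixedPt_of_tendsto_iterate (x := ⟨⟨X 0, hX₀⟩, hX₀ne⟩) ?_
      (lipschitzWith_hutchinson s hs hρ hS).continuous.continuousAt
    rw [tendsto_iff_dist_tendsto_zero]
    refine hK.congr fun n => ?_
    rw [NonemptyCompacts.dist_eq, coe_iterate_hutchinson hs _ _ rfl hX]
    rfl
  exact congrArg SetLike.coe hK₀.symm

theorem eq_of_eq_biUnion_image (hs : s.Nonempty) (hρ : ρ ≠ 0) (hρ₁ : ρ < 1)
    (hS : ∀ j, LipschitzWith ρ (S j)) {K K' : Set α} (hKne : K.Nonempty) (hKc : IsCompact K)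
    (hK : K = ⋃ j ∈ s, S j '' K) (hK'ne : K'.Nonempty) (hK'c : IsCompact K')
    (hK' : K' = ⋃ j ∈ s, S j '' K') : K' = K :=
  congrArg SetLike.coe <| ContractingWith.fixedPoint_unique'
    (f := hutchinson s hs S fun j => (hS j).continuous) ⟨hρ₁, lipschitzWith_hutchinson s hs hρ hS⟩
    (x := ⟨⟨K', hK'c⟩, hK'ne⟩) (y := ⟨⟨K, hKc⟩, hKne⟩)
    (NonemptyCompacts.ext hK'.symm) (NonemptyCompacts.ext hK.symm)

end Attractor

def IsBlockMultiplicative {M : Type*} [Mul M] (b : ℕ) (f : ℕ → M) : Prop :=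
  ∀ q k, k < b → f (b * q + k) = f q * f k

namespace IsBlockMultiplicative

variable {M : Type*} {b : ℕ}

theorem mul [CommMonoid M] {f g : ℕ → M} (hf : IsBlockMultiplicative b f)
    (hg : IsBlockMultiplicative b g) : IsBlockMultiplicative b (f * g) := fun q k hk => by
  simp only [Pi.mul_apply, hf q k hk, hg q k hk, mul_mul_mul_comm]

theorem pow [Monoid M] {f : ℕ → M} (hf : IsBlockMultiplicative b f) (h0 : f 0 = 1) (n : ℕ) :
    IsBlockMultiplicative (b ^ n) f := by
  induction n with
  | zero =>
    intro q k hk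
    obtain rfl : k = 0 := by simpa using hk
    simp [h0]
  | succ n ih =>
    intro q k hk
    have hb : 0 < b := Nat.pos_of_ne_zero fun h => by simp [h] at hk
    have hdiv : k / b < b ^ n := Nat.div_lt_of_lt_mul (by rwa [mul_comm, ← pow_succ])
    have hmod : k % b < b := Nat.mod_lt k hb
    calc f (b ^ (n + 1) * q + k) = f (b * (b ^ n * q + k / b) + k % b) := by
          rw [pow_succ', mul_assoc, mul_add, add_assoc, Nat.div_add_mod]
      _ = f q * (f (k / b) * f (k % b)) := by rw [hf _ _ hmod, ih q _ hdiv, mul_assoc]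
      _ = f q * f k := by rw [← hf _ _ hmod, Nat.div_add_mod]

variable [CommSemiring M] {f : ℕ → M}

theorem sum_range_mul_add (hf : IsBlockMultiplicative b f) (j : ℕ) {r : ℕ} (hr : r ≤ b) :
    ∑ k ∈ Finset.range (b * j + r), f k
      = ∑ k ∈ Finset.range (b * j), f k + f j * ∑ k ∈ Finset.range r, f k := by
  induction r with
  | zero => simp
  | succ r ih =>
    rw [← add_assoc, Finset.sum_range_succ, ih (by omega), hf j r (by omega),
      Finset.sum_range_succ]
    ring

theorem sum_range_mul (hf : IsBlockMultiplicative b f) (j : ℕ) :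
    ∑ k ∈ Finset.range (b * j), f k
      = (∑ k ∈ Finset.range b, f k) * ∑ k ∈ Finset.range j, f k := by
  induction j with
  | zero => simp
  | succ j ih =>
    rw [mul_add_one, hf.sum_range_mul_add j le_rfl, ih, Finset.sum_range_succ]
    ring

theorem sum_range_pow_mul_add (hf : IsBlockMultiplicative b f) (h0 : f 0 = 1) (n j : ℕ)
    {r : ℕ} (hr : r ≤ b ^ n) :
    ∑ k ∈ Finset.range (b ^ n * j + r), f k
      = (∑ k ∈ Finset.range b, f k) ^ n * ∑ k ∈ Finset.range j, f k
        + f j * ∑ k ∈ Finset.range r, f k := by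
  have hpow : ∀ n, ∑ k ∈ Finset.range (b ^ n), f k = (∑ k ∈ Finset.range b, f k) ^ n := by
    intro n
    induction n with
    | zero => simp [h0]
    | succ n ih => rw [pow_succ, (hf.pow h0 n).sum_range_mul, ih, pow_succ]
  rw [(hf.pow h0 n).sum_range_mul_add j hr, (hf.pow h0 n).sum_range_mul, hpow]

end IsBlockMultiplicative

theorem isBlockMultiplicative_pow {M : Type*} [CommMonoid M] {ζ : M} {m : ℕ} (hζ : ζ ^ m = 1) :
    IsBlockMultiplicative (m + 1) (ζ ^ ·) := fun q k _ => by
  dsimp only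
  rw [pow_add, add_mul, one_mul, pow_add, pow_mul, hζ, one_pow, one_mul]

theorem exp_two_pi_I_mul_div_eq_pow (k m : ℕ) :
    exp (2 * π * I * k / m) = exp (2 * π * I / m) ^ k := by
  rw [← exp_nat_mul]
  ring_nf

theorem exp_two_pi_I_div_pow_self (m : ℕ) : exp (2 * π * I / m) ^ m = 1 := by
  rcases eq_or_ne m 0 with rfl | hm
  · exact pow_zero _
  · exact (isPrimitiveRoot_exp m hm).pow_eq_one

noncomputable def thueMorseStep (m : ℕ) (δ : ℕ → ℝ) (k : ℕ) : ℂ :=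
  δ k * exp (2 * π * I * k / m)

theorem isBlockMultiplicative_thueMorseStep {m : ℕ} {δ : ℕ → ℝ}
    (hδ : ∀ q k, k ≤ m → δ ((m + 1) * q + k) = δ q * δ k) :
    IsBlockMultiplicative (m + 1) (thueMorseStep m δ) := by
  have hδ' : IsBlockMultiplicative (m + 1) fun k => (δ k : ℂ) := fun q k hk => by
    simp only [hδ q k (Nat.le_of_lt_succ hk), ofReal_mul]
  have hstep : thueMorseStep m δ = (fun k => (δ k : ℂ)) * (exp (2 * π * I / m) ^ ·) :=
    funext fun k => by simp only [thueMorseStep, exp_two_pi_I_mul_div_eq_pow, Pi.mul_apply]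
  rw [hstep]
  exact hδ'.mul (isBlockMultiplicative_pow (exp_two_pi_I_div_pow_self m))

theorem norm_thueMorseStep {m : ℕ} {δ : ℕ → ℝ} {k : ℕ} (hδ : δ k = 1 ∨ δ k = -1) :
    ‖thueMorseStep m δ k‖ = 1 := by
  have hexp : 2 * π * I * k / m = ((2 * π * k / m : ℝ) : ℂ) * I := by push_cast; ring
  rw [thueMorseStep, norm_mul, hexp, norm_exp_ofReal_mul_I, mul_one, norm_real]
  rcases hδ with h | h <;> simp [h]

theorem thueMorsePath_pow_mul_add {m : ℕ} {δ : ℕ → ℝ} (hδ0 : δ 0 = 1)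
    (hδ : ∀ q k, k ≤ m → δ ((m + 1) * q + k) = δ q * δ k) {p : ℕ → ℂ}
    (hp : ∀ n, p n = ∑ k ∈ Finset.range n, thueMorseStep m δ k) (n j : ℕ) {r : ℕ}
    (hr : r ≤ (m + 1) ^ n) :
    p ((m + 1) ^ n * j + r) = p (m + 1) ^ n * p j + thueMorseStep m δ j * p r := by
  simpa only [← hp] using (isBlockMultiplicative_thueMorseStep hδ).sum_range_pow_mul_add
    (by simp [thueMorseStep, hδ0]) n j hr

theorem isCompact_segment {E : Type*} [AddCommGroup E] [Module ℝ E] [TopologicalSpace E]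
    [IsTopologicalAddGroup E] [ContinuousSMul ℝ E] (x y : E) : IsCompact (segment ℝ x y) := by
  rw [segment_eq_image]
  exact isCompact_Icc.image (by fun_prop)

section PolygonalPath

variable {E F : Type*} [AddCommGroup E] [Module ℝ E] [AddCommGroup F] [Module ℝ F]

def polygonalPath (p : ℕ → E) (N : ℕ) : Set E :=
  ⋃ k ∈ Finset.Icc 1 N, segment ℝ (p (k - 1)) (p k)

theorem polygonalPath_one (p : ℕ → E) : polygonalPath p 1 = segment ℝ (p 0) (p 1) := by
  simp [polygonalPath]

theorem image_polygonalPath (f : E →ᵃ[ℝ] F) (p : ℕ → E) (N : ℕ) :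
    f '' polygonalPath p N = polygonalPath (f ∘ p) N := by
  simp only [polygonalPath, Set.image_iUnion₂, image_segment, Function.comp_apply]

theorem smul_polygonalPath {𝕜 : Type*} [Monoid 𝕜] [DistribMulAction 𝕜 E]
    [SMulCommClass 𝕜 ℝ E] (a : 𝕜) (p : ℕ → E) (N : ℕ) :
    a • polygonalPath p N = polygonalPath (a • p) N :=
  image_polygonalPath (DistribSMul.toLinearMap ℝ E a).toAffineMap p N

theorem polygonalPath_mul {N : ℕ} (hN : 0 < N) (b : ℕ) {p q : ℕ → E} (g : ℕ → E →ᵃ[ℝ] E)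
    (hg : ∀ j < b, ∀ r ≤ N, q (N * j + r) = g j (p r)) :
    polygonalPath q (N * b) = ⋃ j ∈ Finset.range b, g j '' polygonalPath p N := by
  simp only [image_polygonalPath]
  ext z
  simp only [polygonalPath, Set.mem_iUnion, Finset.mem_Icc, Finset.mem_range, exists_prop,
    Function.comp_apply]
  constructor
  · rintro ⟨k, ⟨hk1, hkN⟩, hz⟩
    obtain ⟨j, r, hj, hr, rfl⟩ : ∃ j r, j < b ∧ r < N ∧ k = N * j + (r + 1) :=
      ⟨(k - 1) / N, (k - 1) % N, Nat.div_lt_of_lt_mul (by omega), Nat.mod_lt _ hN,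
        by have := Nat.div_add_mod (k - 1) N; omega⟩
    rw [show N * j + (r + 1) - 1 = N * j + r by omega, hg j hj r hr.le,
      hg j hj (r + 1) hr] at hz
    exact ⟨j, hj, r + 1, ⟨by omega, by omega⟩, by simpa using hz⟩
  · rintro ⟨j, hj, k, ⟨hk1, hkN⟩, hz⟩
    have hjN : N * j + N ≤ N * b := by nlinarith
    refine ⟨N * j + k, ⟨by omega, by omega⟩, ?_⟩
    rwa [Nat.add_sub_assoc hk1, hg j hj _ (by omega), hg j hj _ hkN]

end PolygonalPath

theorem iUnion_image_smul_polygonalPath {p e : ℕ → ℂ} {b N : ℕ} (hN : 0 < N) {c s : ℂ}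
    (hc : c ≠ 0) (hs : s ≠ 0) (hp : ∀ j < b, ∀ r ≤ N, p (N * j + r) = s * p j + e j * p r) :
    ⋃ j ∈ Finset.range b, (fun z => (p j + e j * z) / c) '' (s⁻¹ • polygonalPath p N)
      = (s * c)⁻¹ • polygonalPath p (N * b) := by
  let g : ℕ → ℂ →ᵃ[ℝ] ℂ := fun j =>
    AffineMap.const ℝ ℂ (p j / c) + (LinearMap.mulLeft ℝ (e j / c)).toAffineMap
  have hg : ∀ j, ⇑(g j) = fun z => (p j + e j * z) / c := fun j => funext fun z => by
    simp only [g, AffineMap.coe_add, Pi.add_apply, AffineMap.const_apply,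
      LinearMap.coe_toAffineMap, LinearMap.mulLeft_apply]
    ring
  rw [smul_polygonalPath, smul_polygonalPath,
    polygonalPath_mul hN b (p := s⁻¹ • p) g fun j hj r hr => ?_]
  · simp only [hg]
  · rw [hg, Pi.smul_apply, Pi.smul_apply, hp j hj r hr, smul_eq_mul, smul_eq_mul]
    field_simp

theorem lipschitzWith_add_mul_div {𝕜 : Type*} [NormedField 𝕜] {e : 𝕜} (he : ‖e‖ = 1)
    (a c : 𝕜) : LipschitzWith ‖c‖₊⁻¹ fun z => (a + e * z) / c :=
  LipschitzWith.of_dist_le_mul fun x y => by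
    rw [dist_eq_norm, dist_eq_norm, ← sub_div, add_sub_add_left_eq_sub, ← mul_sub, norm_div,
      norm_mul, he, one_mul, div_eq_inv_mul, NNReal.coe_inv, coe_nnnorm]

theorem generalized_koch_curve_is_attractor_general
    (m : ℕ)
    (δ : ℕ → ℝ) (hδ0 : δ 0 = 1)
    (hδpm : ∀ n, δ n = 1 ∨ δ n = -1)
    (hδrec : ∀ q k, k ≤ m → δ ((m + 1) * q + k) = δ q * δ k)
    (p : ℕ → ℂ)
    (hp : ∀ n, p n = ∑ k ∈ Finset.range n,
      (δ k : ℂ) * Complex.exp (2 * Real.pi * Complex.I * k / m))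
    (P : ℕ → Set ℂ)
    (hP : ∀ n, P n = ⋃ k ∈ Finset.Icc 1 ((m + 1) ^ n), segment ℝ (p (k - 1)) (p k))
    (hbig : 1 < ‖p (m + 1)‖)
    (S : ℕ → ℂ → ℂ)
    (hS : ∀ j z, S j z = (p j + (δ j : ℂ) * Complex.exp (2 * Real.pi * Complex.I * j / m) * z)
      / p (m + 1))
    (K : Set ℂ) (hKne : K.Nonempty) (hKc : IsCompact K)
    (hKlim : Tendsto (fun n => hausdorffDist (((p (m + 1)) ^ n)⁻¹ • P n) K) atTop (𝓝 0)) :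
    K = (⋃ j ∈ Finset.range (m + 1), S j '' K) ∧
      ∀ K' : Set ℂ, K'.Nonempty → IsCompact K' →
        K' = (⋃ j ∈ Finset.range (m + 1), S j '' K') → K' = K := by
  obtain rfl : P = fun n => polygonalPath p ((m + 1) ^ n) := funext hP
  obtain rfl : S = fun j z => (p j + thueMorseStep m δ j * z) / p (m + 1) := funext₂ hS
  set c := p (m + 1)
  have hc : c ≠ 0 := norm_pos_iff.mp (one_pos.trans hbig)
  have hρ : ‖c‖₊⁻¹ ≠ 0 := by simpa using hc
  have hS_lip : ∀ j, LipschitzWith ‖c‖₊⁻¹ fun z => (p j + thueMorseStep m δ j * z) / c :=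
    fun j => lipschitzWith_add_mul_div (norm_thueMorseStep (hδpm j)) _ _
  have hX : ∀ n, ⋃ j ∈ Finset.range (m + 1), (fun z => (p j + thueMorseStep m δ j * z) / c) ''
      ((c ^ n)⁻¹ • polygonalPath p ((m + 1) ^ n))
        = (c ^ (n + 1))⁻¹ • polygonalPath p ((m + 1) ^ (n + 1)) := fun n => by
    rw [pow_succ, pow_succ, iUnion_image_smul_polygonalPath (pow_pos m.succ_pos n) hc
      (pow_ne_zero n hc) fun j _ r hr => thueMorsePath_pow_mul_add hδ0 hδrec hp n j hr]
  have hX₀ : (c ^ 0)⁻¹ • polygonalPath p ((m + 1) ^ 0) = segment ℝ (p 0) (p 1) := by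
    simp [polygonalPath_one]
  have hK := eq_biUnion_image_of_tendsto_hausdorffDist Finset.nonempty_range_add_one hρ hS_lip
    (hX₀ ▸ isCompact_segment _ _) (hX₀ ▸ ⟨p 0, left_mem_segment ℝ _ _⟩) hX hKne hKc hKlim
  exact ⟨hK, fun K' hK'ne hK'c hK' => eq_of_eq_biUnion_image Finset.nonempty_range_add_one hρ
    (inv_lt_one_of_one_lt₀ (by exact_mod_cast hbig)) hS_lip hKne hKc hK hK'ne hK'c hK'⟩

/-- The Hausdorff-metric limit `K` of the rescaled polygonal paths is the unique
nonempty compact subset of `ℂ` satisfying `K = ⋃_{j=0}^m S_j(K)`, where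
`S_j(z) = (p(j) + δ_j e^{2jπi/m} z)/p(m+1)`. -/
theorem generalized_koch_curve_is_attractor
    (m : ℕ) (hm : 1 ≤ m)
    (δ : ℕ → ℝ) (hδ0 : δ 0 = 1)
    (hδpm : ∀ n, δ n = 1 ∨ δ n = -1)
    (hδrec : ∀ q k, k ≤ m → δ ((m + 1) * q + k) = δ q * δ k)
    (p : ℕ → ℂ)
    (hp : ∀ n, p n = ∑ k ∈ Finset.range n,
      (δ k : ℂ) * Complex.exp (2 * Real.pi * Complex.I * k / m))
    (P : ℕ → Set ℂ)
    (hP : ∀ n, P n = ⋃ k ∈ Finset.Icc 1 ((m + 1) ^ n), segment ℝ (p (k - 1)) (p k))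
    (hbig : 1 < ‖p (m + 1)‖)
    (S : ℕ → ℂ → ℂ)
    (hS : ∀ j z, S j z = (p j + (δ j : ℂ) * Complex.exp (2 * Real.pi * Complex.I * j / m) * z)
      / p (m + 1))
    (K : Set ℂ) (hKne : K.Nonempty) (hKc : IsCompact K)
    (hKlim : Tendsto (fun n => hausdorffDist (((p (m + 1)) ^ n)⁻¹ • P n) K) atTop (𝓝 0)) :
    K = (⋃ j ∈ Finset.range (m + 1), S j '' K) ∧
      ∀ K' : Set ℂ, K'.Nonempty → IsCompact K' →
        K' = (⋃ j ∈ Finset.range (m + 1), S j '' K') → K' = K :=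
  generalized_koch_curve_is_attractor_general m δ hδ0 hδpm hδrec p hp P hP hbig S hS K hKne hKc
    hKlim
end

section
/- Let m ≥ 5 be an integer with m ≡ 1 (mod 4), and let δ_0,…,δ_m ∈ {+1,−1} be given by δ_k = +1 for 0 ≤ k ≤ ⌊m/4⌋, δ_k = −1 for ⌊m/4⌋+1 ≤ k ≤ m−⌊m/4⌋−1, and δ_k = +1 for m−⌊m/4⌋ ≤ k ≤ m. Then the imaginary part of p((m+1)/2) = Σ_{k=0}^{(m+1)/2−1} δ_k e^{2kπi/m} is nonnegative; equivalently, Σ_{k=0}^{(m−1)/2} δ_k · sin(2kπ/m) ≥ 0. -/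
/-!
Write `m = 4t + 1`. The `k = 0` term vanishes, and for `j < t` the terms `k = j + 1` (sign `+1`)
and `k = 2t - j` (sign `-1`) pair up: as `2(2t - j) + (2j + 1) = m`, the latter equals
`-sin ((2j + 1)π/m)`, which `sin ((2j + 2)π/m)` dominates because `sin` increases on `[0, π/2]`.
-/

open Complex
open scoped Real
open Finset

theorem Finset.sum_range_two_mul_add_one_eq {M : Type*} [AddCommMonoid M] (f : ℕ → M)
    (t : ℕ) :
    ∑ k ∈ range (2 * t + 1), f k = f 0 + ∑ j ∈ range t, (f (j + 1) + f (2 * t - j)) := by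
  rw [sum_range_succ', add_comm, two_mul t, sum_range_add, sum_add_distrib]
  congr 2
  rw [← sum_range_reflect]
  refine sum_congr rfl fun j hj => ?_
  rw [mem_range] at hj
  congr 1
  omega

theorem Real.sin_mul_pi_div_eq_of_add_eq {a b c : ℝ} (hc : c ≠ 0) (h : a + b = c) :
    Real.sin (a * π / c) = Real.sin (b * π / c) := by
  rw [← Real.sin_pi_sub]
  congr 1
  field_simp
  linarith

theorem Real.sin_mul_pi_div_le_sin_mul_pi_div {a b c : ℝ} (ha : 0 ≤ a) (hab : a ≤ b)
    (hbc : 2 * b ≤ c) : Real.sin (a * π / c) ≤ Real.sin (b * π / c) := by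
  rcases (ha.trans hab).eq_or_lt with hb | hb
  · have : a = 0 := by linarith
    simp [this, ← hb]
  have hc : 0 < c := by linarith
  apply Real.sin_le_sin_of_le_of_le_pi_div_two
  · have : 0 ≤ a * π / c := by positivity
    linarith [Real.pi_pos]
  · rw [div_le_div_iff₀ hc two_pos]; nlinarith [Real.pi_pos]
  · gcongr

theorem Complex.im_ofReal_mul_exp_two_pi_I_mul_div (a : ℝ) (k m : ℕ) :
    ((a : ℂ) * exp (2 * π * I * k / m)).im = a * Real.sin (2 * k * π / m) := by
  have : 2 * π * I * k / m = ((2 * k * π / m : ℝ) : ℂ) * I := by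
    push_cast; ring
  rw [this, im_ofReal_mul, exp_ofReal_mul_I_im]

theorem sum_sign_mul_sin_nonneg (t : ℕ) (δ : ℕ → ℝ) (hpos : ∀ k, k ≤ t → δ k = 1)
    (hneg : ∀ k, t + 1 ≤ k → k ≤ 2 * t → δ k = -1) :
    0 ≤ ∑ k ∈ range (2 * t + 1), δ k * Real.sin (2 * k * π / (4 * t + 1)) := by
  rw [sum_range_two_mul_add_one_eq]
  simp only [CharP.cast_eq_zero, mul_zero, zero_mul, zero_div, Real.sin_zero, zero_add]
  refine sum_nonneg fun j hj => ?_
  rw [mem_range] at hj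
  have hc : (4 * t + 1 : ℝ) ≠ 0 := by positivity
  have hjt : (j : ℝ) + 1 ≤ t := by exact_mod_cast hj
  rw [hpos (j + 1) (by omega), hneg (2 * t - j) (by omega) (by omega),
    Nat.cast_sub (by omega : j ≤ 2 * t),
    Real.sin_mul_pi_div_eq_of_add_eq (a := 2 * (((2 * t : ℕ) : ℝ) - j)) (b := 2 * j + 1) hc
      (by push_cast; ring)]
  have hle := Real.sin_mul_pi_div_le_sin_mul_pi_div (a := 2 * j + 1)
    (b := 2 * ((j + 1 : ℕ) : ℝ)) (c := 4 * t + 1) (by positivity) (by push_cast; linarith)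
    (by push_cast; linarith)
  linarith

theorem im_p_half_nonneg_of_mod_four_eq_one_general
    (m : ℕ) (hm4 : m % 4 = 1)
    (δ : ℕ → ℝ)
    (hδ1 : ∀ k, k ≤ m / 4 → δ k = 1)
    (hδ2 : ∀ k, m / 4 + 1 ≤ k → k ≤ m - m / 4 - 1 → δ k = -1) :
    0 ≤ (∑ k ∈ Finset.range ((m + 1) / 2),
        (δ k : ℂ) * Complex.exp (2 * Real.pi * Complex.I * k / m)).im ∧
      0 ≤ ∑ k ∈ Finset.range ((m + 1) / 2), δ k * Real.sin (2 * k * Real.pi / m) := by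
  obtain ⟨t, rfl⟩ : ∃ t, m = 4 * t + 1 := ⟨m / 4, by omega⟩
  have hsin : 0 ≤ ∑ k ∈ range ((4 * t + 1 + 1) / 2),
      δ k * Real.sin (2 * k * π / (4 * t + 1 : ℕ)) := by
    rw [show (4 * t + 1 + 1) / 2 = 2 * t + 1 by omega]
    push_cast
    exact sum_sign_mul_sin_nonneg t δ (fun k hk => hδ1 k (by omega))
      (fun k hk₁ hk₂ => hδ2 k (by omega) (by omega))
  rw [im_sum]
  simp only [im_ofReal_mul_exp_two_pi_I_mul_div]
  exact ⟨hsin, hsin⟩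

/-- For `m ≡ 1 (mod 4)`, `m ≥ 5`, with the sign pattern `δ_k = +1` for
`0 ≤ k ≤ ⌊m/4⌋`, `δ_k = −1` for `⌊m/4⌋+1 ≤ k ≤ m−⌊m/4⌋−1`, `δ_k = +1` for
`m−⌊m/4⌋ ≤ k ≤ m`, the imaginary part of `p((m+1)/2)` is nonnegative; equivalently
`Σ_{k=0}^{(m−1)/2} δ_k sin(2kπ/m) ≥ 0`. -/
theorem im_p_half_nonneg_of_mod_four_eq_one
    (m : ℕ) (hm : 5 ≤ m) (hm4 : m % 4 = 1)
    (δ : ℕ → ℝ)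
    (hδ1 : ∀ k, k ≤ m / 4 → δ k = 1)
    (hδ2 : ∀ k, m / 4 + 1 ≤ k → k ≤ m - m / 4 - 1 → δ k = -1)
    (hδ3 : ∀ k, m - m / 4 ≤ k → k ≤ m → δ k = 1) :
    0 ≤ (∑ k ∈ Finset.range ((m + 1) / 2),
        (δ k : ℂ) * Complex.exp (2 * Real.pi * Complex.I * k / m)).im ∧
      0 ≤ ∑ k ∈ Finset.range ((m + 1) / 2), δ k * Real.sin (2 * k * Real.pi / m) :=
  im_p_half_nonneg_of_mod_four_eq_one_general m hm4 δ hδ1 hδ2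
end
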